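/- arXiv:1411.2389 — 2 statements merged into one kernel-verified Lean document; each statement's English description precedes it below -/
import Mathlib

section
/- For odd m ≥ 3, the Type II Chebyshev filter bank does not achieve perfect reconstruction: with A(z) = (√2/(m+1)) ∑_{i=0}^m z^{−i} and B(z) = (√2/(m+1)) ∑_{i=0}^m (−1)^i z^{−i}, the Laurent polynomial A(z)² − B(z)² is not of the form 2 z^{−l} for any integer l. -/
/-!
Evaluate at `z = i`. Since `i⁻¹ = -i`, the two filters become `c ∑ (-i)^k` and `c ∑ i^k` with
`c = √2/(m+1)`, and a geometric sum of a unit `ω ≠ 1` has norm at most `2/‖ω - 1‖ = √2` for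
`ω = ±i`. Hence `‖A(i)² - B(i)²‖ ≤ 4c² = 8/(m+1)² < 2 = ‖2 i^{-l}‖`.
-/

open Finset Complex

theorem norm_geom_sum_le {K : Type*} [NormedField K] {ω : K} (hω : ‖ω‖ = 1) (h1 : ω ≠ 1)
    (n : ℕ) : ‖∑ i ∈ range n, ω ^ i‖ ≤ 2 / ‖ω - 1‖ := by
  rw [geom_sum_eq h1, norm_div]
  gcongr
  calc ‖ω ^ n - 1‖ ≤ ‖ω ^ n‖ + ‖(1 : K)‖ := norm_sub_le _ _
    _ = 2 := by rw [norm_pow, hω, one_pow, norm_one]; norm_num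

theorem sq_norm_pm_I_sub_one {ω : ℂ} (hω : ω = I ∨ ω = -I) : ‖ω - 1‖ ^ 2 = 2 := by
  rcases hω with rfl | rfl <;> norm_num [Complex.sq_norm, normSq_apply]

theorem sq_norm_mul_geom_sum_pm_I_le {ω : ℂ} (hω : ω = I ∨ ω = -I) (c : ℂ) (n : ℕ) :
    ‖c * ∑ i ∈ range n, ω ^ i‖ ^ 2 ≤ 2 * ‖c‖ ^ 2 := by
  have hunit : ‖ω‖ = 1 := by rcases hω with rfl | rfl <;> simp
  have hne : ω ≠ 1 := by rcases hω with rfl | rfl <;> simp [Complex.ext_iff]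
  have hsum : ‖∑ i ∈ range n, ω ^ i‖ ^ 2 ≤ 2 := by
    calc ‖∑ i ∈ range n, ω ^ i‖ ^ 2 ≤ (2 / ‖ω - 1‖) ^ 2 := by
          gcongr; exact norm_geom_sum_le hunit hne n
      _ = 2 := by rw [div_pow, sq_norm_pm_I_sub_one hω]; norm_num
  rw [norm_mul, mul_pow, mul_comm]
  gcongr

theorem I_zpow_neg_natCast (i : ℕ) : I ^ (-(i : ℤ)) = (-I) ^ i := by
  rw [zpow_neg, zpow_natCast, ← inv_pow, inv_I]

theorem chebII_no_perfect_reconstruction_general (m : ℕ) (hm3 : 3 ≤ m) :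
    ¬ ∃ l : ℤ, ∀ z : ℂ, z ≠ 0 →
      ((Real.sqrt 2 / (m + 1)) * ∑ i ∈ range (m + 1), z ^ (-(i : ℤ))) ^ 2 -
        ((Real.sqrt 2 / (m + 1)) * ∑ i ∈ range (m + 1), (-1 : ℂ) ^ i * z ^ (-(i : ℤ))) ^ 2
        = 2 * z ^ (-l) := by
  rintro ⟨l, h⟩
  set c : ℂ := Real.sqrt 2 / (m + 1)
  have hc : ‖c‖ ^ 2 = 2 / ((m : ℝ) + 1) ^ 2 := by
    have hden : ‖(m : ℂ) + 1‖ = m + 1 := by exact_mod_cast norm_natCast (m + 1)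
    rw [norm_div, div_pow, norm_real, Real.norm_eq_abs, sq_abs, Real.sq_sqrt zero_le_two, hden]
  have hI := congrArg norm (h I I_ne_zero)
  simp only [I_zpow_neg_natCast, ← mul_pow, neg_one_mul, neg_neg] at hI
  rw [norm_mul, norm_zpow, norm_I, one_zpow, mul_one, norm_ofNat] at hI
  have hm4 : (4 : ℝ) ≤ m + 1 := by exact_mod_cast Nat.succ_le_succ hm3
  have hbound : (2 : ℝ) ≤ 8 / ((m : ℝ) + 1) ^ 2 := by
    calc (2 : ℝ) = ‖_ - _‖ := hI.symm
      _ ≤ ‖_ ^ 2‖ + ‖_ ^ 2‖ := norm_sub_le _ _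
      _ ≤ 2 * ‖c‖ ^ 2 + 2 * ‖c‖ ^ 2 := by
        rw [norm_pow, norm_pow]
        gcongr <;> exact sq_norm_mul_geom_sum_pm_I_le (by simp) c (m + 1)
      _ = 8 / ((m : ℝ) + 1) ^ 2 := by rw [hc]; ring
  rw [le_div_iff₀ (by positivity)] at hbound
  nlinarith

theorem chebII_no_perfect_reconstruction (m : ℕ) (hm : Odd m) (hm3 : 3 ≤ m) :
    ¬ ∃ l : ℤ, ∀ z : ℂ, z ≠ 0 →
      ((Real.sqrt 2 / (m + 1)) * ∑ i ∈ range (m + 1), z ^ (-(i : ℤ))) ^ 2 -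
        ((Real.sqrt 2 / (m + 1)) * ∑ i ∈ range (m + 1), (-1 : ℂ) ^ i * z ^ (-(i : ℤ))) ^ 2
        = 2 * z ^ (-l) :=
  chebII_no_perfect_reconstruction_general m hm3
end

section
/- The 5×5 matrix T = (1/2)·[[0,1,0,0,0],[2,0,0,1,0],[0,0,2,0,0],[0,1,0,0,2],[0,0,0,1,0]] has 1 as an eigenvalue of algebraic multiplicity two; hence it fails the condition that 1 be a simple eigenvalue with all other eigenvalues strictly inside the unit circle. -/
open Polynomial

/-- The centered 5×5 submatrix of `(↓2)·2·H·Hᵀ` for the Type I Chebyshev filter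
`h = (1/2)[1,0,0,1]` (`m = 3`). -/
noncomputable def chebIT5 : Matrix (Fin 5) (Fin 5) ℝ :=
  (1 / 2 : ℝ) • !![0, 1, 0, 0, 0;
                   2, 0, 0, 1, 0;
                   0, 0, 2, 0, 0;
                   0, 1, 0, 0, 2;
                   0, 0, 0, 1, 0]

/-!
Expanding the determinant, the characteristic polynomial of `chebIT5` is
`(X + 1)(X - 1/2)(X + 1/2)(X - 1)²`. The cofactor of `(X - 1)²` does not vanish at `1`,
so `1` is a root of multiplicity exactly two.
-/

theorem Polynomial.rootMultiplicity_mul_X_sub_C_pow_of_not_isRoot {R : Type*} [CommRing R]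
    {p : R[X]} {a : R} (h : ¬p.IsRoot a) (n : ℕ) :
    (p * (X - C a) ^ n).rootMultiplicity a = n := by
  rw [rootMultiplicity_mul_X_sub_C_pow (by rintro rfl; simp at h),
    rootMultiplicity_eq_zero h, zero_add]

theorem chebIT5_charpoly :
    chebIT5.charpoly = (X + C 1) * (X - C 2⁻¹) * (X + C 2⁻¹) * (X - C 1) ^ 2 := by
  -- `ring` sees `C 2⁻¹` as an atom, so the one relation it needs is supplied by hand.
  have two_mul_half : (2 : ℝ[X]) * C 2⁻¹ = 1 := by
    rw [← map_ofNat C 2, ← C_mul, mul_inv_cancel₀ two_ne_zero, C_1]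
  simp only [Matrix.charpoly, chebIT5, one_div, Matrix.smul_of, Matrix.smul_cons, smul_eq_mul,
    mul_zero, mul_one, ne_eq, OfNat.ofNat_ne_zero, not_false_eq_true, inv_mul_cancel₀,
    Matrix.det_succ_row_zero, Matrix.charmatrix_apply, Matrix.of_apply, Matrix.submatrix_apply,
    Fin.succAbove, Matrix.cons_val, Fin.reduceSucc, Matrix.det_unique, Fin.default_eq_zero,
    Fin.sum_univ_succ, Fin.coe_ofNat_eq_mod, ↓reduceIte, Fin.succ_pos, Fin.reduceCastSucc,
    Fin.reduceLT, Fin.reduceEq, Matrix.diagonal_apply_eq, Matrix.diagonal_apply_ne, map_zero,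
    map_one]
  linear_combination (1 - X) * X ^ 2 * two_mul_half

theorem chebIT5_charpoly_rootMultiplicity_one : chebIT5.charpoly.rootMultiplicity 1 = 2 := by
  rw [chebIT5_charpoly]
  exact rootMultiplicity_mul_X_sub_C_pow_of_not_isRoot (by norm_num) 2

theorem chebIT5_eigenvalue_one_double :
    chebIT5.charpoly.rootMultiplicity 1 = 2 ∧
    ¬ (chebIT5.charpoly.rootMultiplicity 1 = 1 ∧
        ∀ lam : ℝ, chebIT5.charpoly.IsRoot lam → lam ≠ 1 → |lam| < 1) :=
  ⟨chebIT5_charpoly_rootMultiplicity_one, fun h =>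
    absurd (chebIT5_charpoly_rootMultiplicity_one.symm.trans h.1) (by norm_num)⟩
end
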